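/- Let K ≥ 2, 1 ≤ t < K, t ≤ α ≤ K - t, and consider the interference indicator set R_j^r(n) = { k ∈ k_j^r \ {k_j^r[n]} : V[p_j^r[n], k] = 0 }, with V the cyclic placement matrix and k_j^r, p_j^r the cyclic-caching user/packet vectors. Then |R_j^r(n)| = α - 1 for every j ∈ [K-t], r ∈ [K], n ∈ [t+α]. -/

import Mathlib

/-- The mod operator with offset one. -/
def pmod (a b : ℕ) : ℕ := (a - 1) % b + 1

/-- The cyclic placement matrix: `V K t p k = 1` iff `(k - p) mod K ∈ {0,…,t-1}`. -/
noncomputable def V (K t p k : ℕ) : ℕ :=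
  if ((k : ℤ) - (p : ℤ)) % (K : ℤ) ∈ Finset.Ico (0 : ℤ) (t : ℤ) then 1 else 0

/-- Entry `n` of the round-1 user index vector `k_j¹`. -/
def kvec1 (K t j n : ℕ) : ℕ :=
  if n ≤ t then n else pmod (n - t + j - 1) (K - t) + t

/-- Entry `n` of the round-1 packet index vector `p_j¹`. -/
def pvec1 (K t j n : ℕ) : ℕ :=
  if n ≤ t then pmod (t + j - n) (K - t) + n else 1

/-- Entry `n` of the round-`r` user index vector `k_j^r = (k_j¹ + r) % K`. -/
def kvec (K t j r n : ℕ) : ℕ := pmod (kvec1 K t j n + r) K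

/-- Entry `n` of the round-`r` packet index vector `p_j^r = (p_j¹ + r) % K`. -/
def pvec (K t j r n : ℕ) : ℕ := pmod (pvec1 K t j n + r) K

/-- The interference indicator set `R_j^r(n)`. -/
noncomputable def Rset (K t α j r n : ℕ) : Finset ℕ :=
  (((Finset.Icc 1 (t + α)).image (fun m => kvec K t j r m)).filter
    (fun k => k ≠ kvec K t j r n ∧ V K t (pvec K t j r n) k = 0))

/-!
The rotation `x ↦ pmod (x + r) K` is injective on `[1, K]` and preserves `V`, so round `r` has
the same interference pattern as round 1, and `R_j^r(n)` is in bijection with the indices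
`m ≠ n` whose user does not cache packet `p = p_j¹[n]`. In round 1 the `t + α` served users are
distinct; `p` is cached exactly by the `t` users `p, p + 1, …, p + t - 1 (mod K)`, all of which are
served (those above `t` fall into the cyclic window of `α ≥ t` users `t + pmod (j + i) (K - t)`,
since `p ≡ t + j (mod K - t)`); and `k_j¹[n]` does not cache `p`. Hence
`|R_j^r(n)| = (t + α) - t - 1`.
-/

open Finset

section pmod

variable {a b x : ℕ}

lemma one_le_pmod (a b : ℕ) : 1 ≤ pmod a b := Nat.le_add_left 1 _

lemma pmod_le (hb : 0 < b) (a : ℕ) : pmod a b ≤ b := by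
  have := Nat.mod_lt (a - 1) hb
  unfold pmod; omega

lemma pmod_modEq (ha : 1 ≤ a) : pmod a b ≡ a [MOD b] := by
  unfold pmod
  conv_rhs => rw [← Nat.sub_add_cancel ha]
  exact (Nat.mod_modEq _ _).add_right 1

lemma eq_pmod_iff (hb : 0 < b) (ha : 1 ≤ a) (hx : x ∈ Icc 1 b) :
    x = pmod a b ↔ x ≡ a [MOD b] := by
  refine ⟨fun h => h ▸ pmod_modEq ha, fun h => (h.trans (pmod_modEq ha).symm).eq_of_abs_lt ?_⟩
  have := pmod_le hb a
  have := one_le_pmod a b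
  rw [mem_Icc] at hx
  rw [abs_lt]; omega

lemma pmod_eq_self (hb : 0 < b) (ha : a ∈ Icc 1 b) : pmod a b = a :=
  ((eq_pmod_iff hb (mem_Icc.1 ha).1 ha).2 rfl).symm

lemma eq_of_pmod_eq {a₁ a₂ : ℕ} (h₁ : 1 ≤ a₁) (h₂ : 1 ≤ a₂) (hlt₁ : a₁ < a₂ + b)
    (hlt₂ : a₂ < a₁ + b) (h : pmod a₁ b = pmod a₂ b) : a₁ = a₂ :=
  ((pmod_modEq h₁).symm.trans (h ▸ pmod_modEq h₂)).eq_of_abs_lt (by rw [abs_lt]; omega)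

end pmod

section V

variable {K t p k : ℕ}

lemma V_eq_zero_iff_ne_one : V K t p k = 0 ↔ V K t p k ≠ 1 := by
  unfold V; split_ifs <;> simp

lemma V_eq_one_iff (hp : p ≤ K) : V K t p k = 1 ↔ (k + K - p) % K < t := by
  have : ((k : ℤ) - p) % K = ((k + K - p) % K : ℕ) := by
    rw [Int.natCast_mod, Nat.cast_sub (by omega), Nat.cast_add, add_sub_right_comm,
      Int.add_emod_right]
  unfold V
  simp only [this, mem_Ico, Nat.cast_nonneg, true_and, Nat.cast_lt]
  by_cases h : (k + K - p) % K < t <;> simp [h]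

lemma V_eq_one_iff_exists (hK : 0 < K) (htK : t ≤ K) (hp : p ∈ Icc 1 K)
    (hk : k ∈ Icc 1 K) :
    V K t p k = 1 ↔ ∃ v < t, pmod (p + v) K = k := by
  rw [mem_Icc] at hp hk
  rw [V_eq_one_iff hp.2]
  constructor
  · intro h
    refine ⟨_, h, ((eq_pmod_iff hK (by omega) (mem_Icc.2 hk)).2 ?_).symm⟩
    calc k ≡ k + K [MOD K] := (Nat.add_modEq_right).symm
      _ = p + (k + K - p) := by omega
      _ ≡ p + (k + K - p) % K [MOD K] := ((Nat.mod_modEq _ _).symm).add_left p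
  · rintro ⟨v, hv, rfl⟩
    have hmod : pmod (p + v) K + K - p ≡ v [MOD K] := by
      refine Nat.ModEq.add_left_cancel' p ?_
      calc p + (pmod (p + v) K + K - p) = pmod (p + v) K + K := by
            have := one_le_pmod (p + v) K; omega
        _ ≡ pmod (p + v) K [MOD K] := Nat.add_modEq_right
        _ ≡ p + v [MOD K] := pmod_modEq (by omega)
    rw [hmod, Nat.mod_eq_of_lt (by omega)]
    exact hv

lemma V_pmod_add_pmod_add (r : ℕ) (hp : 1 ≤ p) (hk : 1 ≤ k) :
    V K t (pmod (p + r) K) (pmod (k + r) K) = V K t p k := by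
  have hp' := Int.natCast_modEq_iff.2 (pmod_modEq (b := K) (show 1 ≤ p + r by omega))
  have hk' := Int.natCast_modEq_iff.2 (pmod_modEq (b := K) (show 1 ≤ k + r by omega))
  have : ((pmod (k + r) K : ℕ) : ℤ) - (pmod (p + r) K : ℕ) ≡ k - p [ZMOD K] := by
    simpa using hk'.sub hp'
  unfold V
  rw [this.eq]

lemma card_filter_V_eq_one (hK : 0 < K) (htK : t ≤ K) (hp : p ∈ Icc 1 K) :
    #{k ∈ Icc 1 K | V K t p k = 1} = t := by
  have : {k ∈ Icc 1 K | V K t p k = 1} = (range t).image (fun v => pmod (p + v) K) := by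
    ext k
    simp only [mem_filter, mem_image, mem_range]
    constructor
    · rintro ⟨hk, h⟩
      exact (V_eq_one_iff_exists hK htK hp hk).1 h
    · rintro ⟨v, hv, rfl⟩
      have hk : pmod (p + v) K ∈ Icc 1 K := mem_Icc.2 ⟨one_le_pmod _ _, pmod_le hK _⟩
      exact ⟨hk, (V_eq_one_iff_exists hK htK hp hk).2 ⟨v, hv, rfl⟩⟩
  rw [this, card_image_of_injOn, card_range]
  intro v₁ hv₁ v₂ hv₂ h
  simp only [coe_range, Set.mem_Iio] at hv₁ hv₂
  rw [mem_Icc] at hp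
  have := eq_of_pmod_eq (b := K) (by omega) (by omega) (by omega) (by omega) h
  omega

end V

lemma Finset.card_filter_ne_and_not {ι : Type*} [DecidableEq ι] {s : Finset ι} {P : ι → Prop}
    [DecidablePred P] {n : ι} (hn : n ∈ s) (hPn : ¬P n) :
    #{m ∈ s | m ≠ n ∧ ¬P m} = #s - #{m ∈ s | P m} - 1 := by
  have : {m ∈ s | m ≠ n ∧ ¬P m} = {m ∈ s | ¬P m}.erase n := by
    ext m; simp [and_left_comm]
  have hsplit := card_filter_add_card_filter_not (s := s) (fun m => P m)
  rw [this, card_erase_of_mem (mem_filter.2 ⟨hn, hPn⟩)]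
  omega

section RoundOne

variable {K t α j m n k : ℕ}

lemma kvec1_of_le (h : m ≤ t) : kvec1 K t j m = m := if_pos h

lemma kvec1_of_lt (h : t < m) : kvec1 K t j m = pmod (m - t + j - 1) (K - t) + t :=
  if_neg h.not_ge

lemma pvec1_of_le (h : n ≤ t) : pvec1 K t j n = pmod (t + j - n) (K - t) + n := if_pos h

lemma pvec1_of_lt (h : t < n) : pvec1 K t j n = 1 := if_neg h.not_ge

lemma kvec1_mem_Icc (htK : t < K) (hm : 1 ≤ m) : kvec1 K t j m ∈ Icc 1 K := by
  rw [mem_Icc]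
  rcases le_or_gt m t with h | h
  · rw [kvec1_of_le h]; omega
  · have := one_le_pmod (m - t + j - 1) (K - t)
    have := pmod_le (show 0 < K - t by omega) (m - t + j - 1)
    rw [kvec1_of_lt h]; omega

lemma pvec1_mem_Icc (htK : t < K) (n : ℕ) : pvec1 K t j n ∈ Icc 1 K := by
  rw [mem_Icc]
  rcases le_or_gt n t with h | h
  · have := one_le_pmod (t + j - n) (K - t)
    have := pmod_le (show 0 < K - t by omega) (t + j - n)
    rw [pvec1_of_le h]; omega
  · rw [pvec1_of_lt h]; omega

lemma kvec1_injOn (hαK : α ≤ K - t) (hj : 1 ≤ j) :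
    Set.InjOn (kvec1 K t j) (Set.Icc 1 (t + α)) := by
  intro m₁ hm₁ m₂ hm₂ h
  rw [Set.mem_Icc] at hm₁ hm₂
  rcases le_or_gt m₁ t with h₁ | h₁ <;> rcases le_or_gt m₂ t with h₂ | h₂
  · rwa [kvec1_of_le h₁, kvec1_of_le h₂] at h
  · have := one_le_pmod (m₂ - t + j - 1) (K - t)
    rw [kvec1_of_le h₁, kvec1_of_lt h₂] at h; omega
  · have := one_le_pmod (m₁ - t + j - 1) (K - t)
    rw [kvec1_of_lt h₁, kvec1_of_le h₂] at h; omega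
  · rw [kvec1_of_lt h₁, kvec1_of_lt h₂, Nat.add_right_cancel_iff] at h
    have := eq_of_pmod_eq (by omega) (by omega) (by omega) (by omega) h
    omega

lemma V_pvec1_kvec1_self_ne_one (htK : t < K) :
    V K t (pvec1 K t j n) (kvec1 K t j n) ≠ 1 := by
  rw [Ne, V_eq_one_iff (mem_Icc.1 (pvec1_mem_Icc htK n)).2, not_lt]
  rcases le_or_gt n t with h | h
  · have := one_le_pmod (t + j - n) (K - t)
    have := pmod_le (show 0 < K - t by omega) (t + j - n)
    rw [kvec1_of_le h, pvec1_of_le h, Nat.mod_eq_of_lt (by omega)]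
    omega
  · have := mem_Icc.1 (kvec1_mem_Icc (j := j) htK (show 1 ≤ n by omega))
    have := one_le_pmod (n - t + j - 1) (K - t)
    rw [pvec1_of_lt h, show kvec1 K t j n + K - 1 = kvec1 K t j n - 1 + K by omega,
      Nat.add_mod_right, Nat.mod_eq_of_lt (by omega), kvec1_of_lt h]
    omega

lemma kvec1_eq_of_modEq (hj : 1 ≤ j) (hm : t < m) (hk : k ∈ Icc (t + 1) K)
    (h : k + 1 ≡ m + j [MOD K - t]) : kvec1 K t j m = k := by
  rw [mem_Icc] at hk
  rw [kvec1_of_lt hm, eq_comm, ← Nat.sub_eq_iff_eq_add (by omega),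
    eq_pmod_iff (by omega) (by omega) (mem_Icc.2 (by omega))]
  refine Nat.ModEq.add_right_cancel' (t + 1) ?_
  rwa [show k - t + (t + 1) = k + 1 by omega, show m - t + j - 1 + (t + 1) = m + j by omega]

lemma exists_kvec1_eq_of_V_pvec1_eq_one (htK : t < K) (htα : t ≤ α) (hj : 1 ≤ j)
    (hk : k ∈ Icc 1 K) (hV : V K t (pvec1 K t j n) k = 1) :
    ∃ m ∈ Icc 1 (t + α), kvec1 K t j m = k := by
  rcases le_or_gt k t with hkt | hkt
  · exact ⟨k, mem_Icc.2 ⟨(mem_Icc.1 hk).1, by omega⟩, kvec1_of_le hkt⟩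
  obtain ⟨v, hv, rfl⟩ :=
    (V_eq_one_iff_exists (by omega) htK.le (pvec1_mem_Icc htK n) hk).1 hV
  rcases le_or_gt n t with hn | hn
  · refine ⟨t + 1 + v, mem_Icc.2 ⟨by omega, by omega⟩, kvec1_eq_of_modEq hj (by omega)
      (mem_Icc.2 ⟨hkt, (mem_Icc.1 hk).2⟩) ?_⟩
    have hq := pmod_modEq (b := K - t) (show 1 ≤ t + j - n by omega)
    have := one_le_pmod (t + j - n) (K - t)
    have := pmod_le (show 0 < K - t by omega) (t + j - n)
    rw [pvec1_of_le hn] at hkt ⊢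
    set q := pmod (t + j - n) (K - t)
    have := pmod_le (show 0 < K by omega) (q + n + v)
    have hk_eq : pmod (q + n + v) K = q + n + v :=
      (pmod_modEq (by omega)).eq_of_abs_lt (by rw [abs_lt]; omega)
    rw [hk_eq]
    calc q + n + v + 1 ≡ t + j - n + n + v + 1 [MOD K - t] :=
          ((hq.add_right n).add_right v).add_right 1
      _ = t + 1 + v + j := by omega
  · rw [pvec1_of_lt hn, pmod_eq_self (by omega) (mem_Icc.2 ⟨by omega, by omega⟩)] at hkt
    omega

lemma card_filter_V_pvec1_kvec1_eq_one (htK : t < K) (htα : t ≤ α) (hαK : α ≤ K - t)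
    (hj : 1 ≤ j) : #{m ∈ Icc 1 (t + α) | V K t (pvec1 K t j n) (kvec1 K t j m) = 1} = t := by
  refine (card_nbij (kvec1 K t j) (fun m hm => ?_) ((kvec1_injOn hαK hj).mono fun m hm => ?_)
    fun k hk => ?_).trans (card_filter_V_eq_one (by omega) htK.le (pvec1_mem_Icc (j := j) htK n))
  · rw [coe_filter] at hm ⊢
    exact ⟨kvec1_mem_Icc htK (mem_Icc.1 hm.1).1, hm.2⟩
  · simpa using (mem_filter.1 hm).1
  · rw [coe_filter] at hk
    obtain ⟨m, hm, rfl⟩ := exists_kvec1_eq_of_V_pvec1_eq_one htK htα hj hk.1 hk.2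
    exact ⟨m, mem_filter.2 ⟨hm, hk.2⟩, rfl⟩

end RoundOne

section Rounds

variable {K t α j r n : ℕ}

lemma kvec_injOn (htK : t < K) (hαK : α ≤ K - t) (hj : 1 ≤ j) :
    Set.InjOn (kvec K t j r) (Set.Icc 1 (t + α)) := by
  intro m₁ hm₁ m₂ hm₂ h
  have h₁ := mem_Icc.1 (kvec1_mem_Icc (j := j) htK hm₁.1)
  have h₂ := mem_Icc.1 (kvec1_mem_Icc (j := j) htK hm₂.1)
  exact kvec1_injOn hαK hj hm₁ hm₂
    (Nat.add_right_cancel (eq_of_pmod_eq (by omega) (by omega) (by omega) (by omega) h))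

lemma card_Rset_eq (htK : t < K) (hαK : α ≤ K - t) (hj : 1 ≤ j) (hn : n ∈ Icc 1 (t + α)) :
    #(Rset K t α j r n) =
      #{m ∈ Icc 1 (t + α) | m ≠ n ∧ ¬V K t (pvec1 K t j n) (kvec1 K t j m) = 1} := by
  have hinj := kvec_injOn (r := r) htK hαK hj
  rw [Rset, filter_image, card_image_of_injOn (hinj.mono (by intro m; simp +contextual))]
  refine congrArg card (filter_congr fun m hm => ?_)
  rw [hinj.ne_iff (by simpa using hm) (by simpa using hn), V_eq_zero_iff_ne_one, pvec, kvec,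
    V_pmod_add_pmod_add r (mem_Icc.1 (pvec1_mem_Icc htK n)).1
      (mem_Icc.1 (kvec1_mem_Icc htK (mem_Icc.1 hm).1)).1]

end Rounds

theorem interference_set_card_general (K t α : ℕ) (htK : t < K)
    (htα : t ≤ α) (hαK : α ≤ K - t) :
    ∀ j ∈ Finset.Icc 1 (K - t), ∀ r ∈ Finset.Icc 1 K, ∀ n ∈ Finset.Icc 1 (t + α),
      (Rset K t α j r n).card = α - 1 := by
  intro j hj r _ n hn
  have hj₁ := (mem_Icc.1 hj).1
  rw [card_Rset_eq htK hαK hj₁ hn,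
    card_filter_ne_and_not hn (V_pvec1_kvec1_self_ne_one htK),
    card_filter_V_pvec1_kvec1_eq_one htK htα hαK hj₁, Nat.card_Icc]
  omega

theorem interference_set_card (K t α : ℕ) (hK : 2 ≤ K) (ht : 1 ≤ t) (htK : t < K)
    (htα : t ≤ α) (hαK : α ≤ K - t) :
    ∀ j ∈ Finset.Icc 1 (K - t), ∀ r ∈ Finset.Icc 1 K, ∀ n ∈ Finset.Icc 1 (t + α),
      (Rset K t α j r n).card = α - 1 :=
  interference_set_card_general K t α htK htα hαK
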